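/- For every normal default theory (D,W) with W consistent and finite there exists a prerequisite-free normal default theory (D', ∅) (with empty objective part) that is equivalent to (D,W), i.e., ext(D', ∅) = ext(D,W). -/

import Mathlib

/-- Propositional formulas over a set of atoms `α`. -/
inductive PropForm (α : Type) : Type
  | atom : α → PropForm α
  | fls  : PropForm α
  | impl : PropForm α → PropForm α → PropForm α

namespace PropForm

/-- Negation `¬φ`, definable as `φ → ⊥`. -/
def neg {α : Type} (φ : PropForm α) : PropForm α := impl φ fls

/-- Conjunction, definable from implication and falsum. -/
def conj {α : Type} (φ ψ : PropForm α) : PropForm α := (φ.impl ψ.neg).neg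

/-- Biimplication `φ ↔ ψ`. -/
def biimp {α : Type} (φ ψ : PropForm α) : PropForm α := conj (φ.impl ψ) (ψ.impl φ)

/-- Evaluation of a formula under a valuation of the atoms. -/
def eval {α : Type} (v : α → Prop) : PropForm α → Prop
  | atom a   => v a
  | fls      => False
  | impl φ ψ => eval v φ → eval v ψ

/-- Renaming/embedding of atoms. -/
def map {α β : Type} (f : α → β) : PropForm α → PropForm β
  | atom a   => atom (f a)
  | fls      => fls
  | impl φ ψ => impl (map f φ) (map f ψ)

end PropForm

/-- Classical propositional consequence operator. -/
def Cn {α : Type} (S : Set (PropForm α)) : Set (PropForm α) :=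
  {φ | ∀ v : α → Prop, (∀ ψ ∈ S, ψ.eval v) → φ.eval v}

/-- A theory: a set of formulas closed under propositional consequence. -/
def IsTheory {α : Type} (S : Set (PropForm α)) : Prop := Cn S ⊆ S

/-- A set of formulas is consistent if its consequences are not the whole language. -/
def Consistent {α : Type} (S : Set (PropForm α)) : Prop := Cn S ≠ Set.univ

/-- A default `α : Γ / β` with prerequisite, finite set of justifications, consequent. -/
structure Default (α : Type) where
  pre : PropForm α
  jus : Finset (PropForm α)
  con : PropForm α

/-- A default is applicable w.r.t. `S` if no justification's negation follows from `S`. -/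
def Default.Applicable {α : Type} (S : Set (PropForm α)) (d : Default α) : Prop :=
  ∀ γ ∈ d.jus, γ.neg ∉ Cn S

/-- The reduct of `D` w.r.t. `S`: the monotone rules `pre/con` of `S`-applicable defaults. -/
def Reduct {α : Type} (D : Set (Default α)) (S : Set (PropForm α)) :
    Set (PropForm α × PropForm α) :=
  {r | ∃ d ∈ D, d.Applicable S ∧ r = (d.pre, d.con)}

/-- `Cn^B(W)`: consequences of `W` in propositional calculus augmented with rules `B`;
the least set containing `W`, closed under `Cn`, and closed under the rules of `B`. -/
def CnRules {α : Type} (B : Set (PropForm α × PropForm α)) (W : Set (PropForm α)) :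
    Set (PropForm α) :=
  ⋂₀ {S | W ⊆ S ∧ Cn S ⊆ S ∧ ∀ r ∈ B, r.1 ∈ S → r.2 ∈ S}

/-- `S` is an extension of the default theory `(D, W)`. -/
def IsExtension {α : Type} (D : Set (Default α)) (W S : Set (PropForm α)) : Prop :=
  S = CnRules (Reduct D S) W

/-- The family of all extensions of `(D, W)`. -/
def ext {α : Type} (D : Set (Default α)) (W : Set (PropForm α)) : Set (Set (PropForm α)) :=
  {S | IsExtension D W S}

/-- A default is prerequisite-free if its prerequisite is a tautology. -/
def Default.PrereqFree {α : Type} (d : Default α) : Prop :=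
  d.pre ∈ Cn (∅ : Set (PropForm α))

/-- A default is normal if it has the form `α : {β} / β`. -/
def Default.Normal {α : Type} (d : Default α) : Prop := d.jus = {d.con}

/-!
Replace the finite `W` by a single formula `w`, and call `w ∧ β₁ ∧ … ∧ βₖ` grounded when each
`βⱼ` is the consequent of a default of `D` whose prerequisite follows from `w ∧ β₁ ∧ … ∧ βⱼ₋₁`.
For an extension `S` of the normal theory `(D, {w})`, every grounded formula either lies in `S` or
contradicts it, and the grounded formulas in `S` generate `S`: they are directed under entailment,
so by compactness a prerequisite derived from them is derived from one of them, which can then be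
extended by the consequent. Hence `S = Cn {θ grounded | ¬θ ∉ Cn S}`, which is exactly the fixpoint
equation of the prerequisite-free normal theory `{⊤ : θ / θ | θ grounded}`. Conversely, a solution
`S` of that equation is an extension: a grounded formula consistent with `S` lies in `S`, so `S` is
closed under every default applicable w.r.t. `S`.
-/

open PropForm

variable {α : Type}

def Sat (X : Set (PropForm α)) : Prop := ∃ v : α → Prop, ∀ φ ∈ X, φ.eval v

lemma eval_conj {v : α → Prop} {φ ψ : PropForm α} :
    (φ.conj ψ).eval v ↔ φ.eval v ∧ ψ.eval v := by
  simp only [conj, neg, eval]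
  tauto

lemma conj_mem_Cn {X : Set (PropForm α)} {φ ψ : PropForm α} (hφ : φ ∈ X) (hψ : ψ ∈ X) :
    φ.conj ψ ∈ Cn X :=
  fun _ hv => eval_conj.2 ⟨hv φ hφ, hv ψ hψ⟩

lemma left_mem_Cn_of_conj_mem {X : Set (PropForm α)} {φ ψ : PropForm α} (h : φ.conj ψ ∈ X) :
    φ ∈ Cn X :=
  fun _ hv => (eval_conj.1 (hv _ h)).1

lemma right_mem_Cn_of_conj_mem {X : Set (PropForm α)} {φ ψ : PropForm α} (h : φ.conj ψ ∈ X) :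
    ψ ∈ Cn X :=
  fun _ hv => (eval_conj.1 (hv _ h)).2

lemma mem_Cn_singleton {φ ψ : PropForm α} : φ ∈ Cn {ψ} ↔ ∀ v, ψ.eval v → φ.eval v := by
  simp [Cn]

lemma subset_Cn (X : Set (PropForm α)) : X ⊆ Cn X := fun φ hφ _ hv => hv φ hφ

lemma Cn_mono {X Y : Set (PropForm α)} (h : X ⊆ Y) : Cn X ⊆ Cn Y :=
  fun _ hφ v hv => hφ v fun ψ hψ => hv ψ (h hψ)

lemma Cn_subset_Cn_of_subset {X Y : Set (PropForm α)} (h : X ⊆ Cn Y) : Cn X ⊆ Cn Y :=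
  fun _ hφ v hv => hφ v fun _ hψ => h hψ v hv

lemma Cn_Cn (X : Set (PropForm α)) : Cn (Cn X) = Cn X :=
  (Cn_subset_Cn_of_subset le_rfl).antisymm (subset_Cn _)

lemma Cn_congr {X Y : Set (PropForm α)}
    (h : ∀ v, (∀ φ ∈ X, φ.eval v) ↔ (∀ φ ∈ Y, φ.eval v)) : Cn X = Cn Y := by
  ext φ
  exact forall_congr' fun v => imp_congr_left (h v)

lemma Sat.mono {X Y : Set (PropForm α)} (h : Y ⊆ X) : Sat X → Sat Y :=
  fun ⟨v, hv⟩ => ⟨v, fun φ hφ => hv φ (h hφ)⟩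

lemma sat_Cn_iff {X : Set (PropForm α)} : Sat (Cn X) ↔ Sat X :=
  ⟨Sat.mono (subset_Cn X), fun ⟨v, hv⟩ => ⟨v, fun _ hφ => hφ v hv⟩⟩

lemma consistent_iff_sat {X : Set (PropForm α)} : Consistent X ↔ Sat X := by
  refine ⟨fun h => ?_, fun ⟨v, hv⟩ h => ?_⟩
  · by_contra hX
    exact h (Set.eq_univ_of_forall fun φ v hv => (hX ⟨v, hv⟩).elim)
  · exact (h ▸ Set.mem_univ fls : fls ∈ Cn X) v hv

lemma neg_mem_Cn_iff {X : Set (PropForm α)} {φ : PropForm α} :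
    φ.neg ∈ Cn X ↔ ¬ Sat (insert φ X) := by
  refine ⟨fun h ⟨v, hv⟩ => h v (fun ψ hψ => hv ψ (.inr hψ)) (hv φ (.inl rfl)), fun h v hv hφ => ?_⟩
  exact h ⟨v, by rintro ψ (rfl | hψ); exacts [hφ, hv ψ hψ]⟩

lemma neg_notMem_Cn_iff {X : Set (PropForm α)} {φ : PropForm α} :
    φ.neg ∉ Cn X ↔ Sat (insert φ X) :=
  neg_mem_Cn_iff.not_left

lemma neg_mem_Cn_of_entails {X : Set (PropForm α)} {φ ψ : PropForm α}
    (hψ : ∀ v, ψ.eval v → φ.eval v) (hφ : φ.neg ∈ Cn X) : ψ.neg ∈ Cn X :=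
  fun v hv h => hφ v hv (hψ v h)

lemma Sat.neg_notMem_Cn {X : Set (PropForm α)} {φ : PropForm α} (hX : Sat X) (hφ : φ ∈ X) :
    φ.neg ∉ Cn X := by
  rwa [neg_notMem_Cn_iff, Set.insert_eq_of_mem hφ]

lemma exists_Cn_eq_singleton {W : Set (PropForm α)} (hW : W.Finite) :
    ∃ w : PropForm α, Cn W = Cn {w} := by
  suffices ∃ w : PropForm α, ∀ v, (∀ φ ∈ W, φ.eval v) ↔ w.eval v by
    obtain ⟨w, hw⟩ := this
    exact ⟨w, Cn_congr fun v => by simpa using hw v⟩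
  induction W, hW using Set.Finite.induction_on with
  | empty => exact ⟨fls.impl fls, by simp [eval]⟩
  | @insert φ W _ _ ih =>
    obtain ⟨w, hw⟩ := ih
    exact ⟨φ.conj w, fun v => by rw [Set.forall_mem_insert, hw, eval_conj]⟩

def models (φ : PropForm α) : Set (α → Bool) := {b | φ.eval (fun a => b a)}

lemma isClopen_models (φ : PropForm α) : IsClopen (models φ) := by
  induction φ with
  | atom a => exact (isClopen_discrete {true}).preimage (continuous_apply a)
  | fls => exact isClopen_empty
  | impl φ ψ hφ hψ =>
    convert hφ.compl.union hψ using 1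
    ext b
    simp only [models, eval, Set.mem_union, Set.mem_compl_iff]
    tauto

/-- Compactness: the space `α → Bool` of valuations is compact and each `models φ` is clopen. -/
lemma exists_finset_subset_of_mem_Cn {X : Set (PropForm α)} {φ : PropForm α} (h : φ ∈ Cn X) :
    ∃ s : Finset (PropForm α), ↑s ⊆ X ∧ φ ∈ Cn ↑s := by
  classical
  have hcover : (models φ)ᶜ ∩ ⋂ ψ : X, models ψ.1 = ∅ := by
    refine Set.eq_empty_of_forall_notMem fun b ⟨hb, hbX⟩ => hb ?_
    exact h _ fun ψ hψ => Set.mem_iInter.1 hbX ⟨ψ, hψ⟩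
  obtain ⟨u, hu⟩ := (isClopen_models φ).compl.isClosed.isCompact.elim_finite_subfamily_closed
    _ (fun ψ : X => (isClopen_models ψ.1).isClosed) hcover
  refine ⟨u.map (Function.Embedding.subtype _), by simp, fun v hv => ?_⟩
  by_contra hφ
  refine (Set.eq_empty_iff_forall_notMem.1 hu) (fun a => decide (v a)) ⟨?_, ?_⟩
  · simpa [models] using hφ
  · simp only [Set.mem_iInter]
    intro ψ hψ
    simpa [models] using hv ψ.1 (Finset.mem_map_of_mem _ hψ)

section Rules

variable {B : Set (PropForm α × PropForm α)} {W S : Set (PropForm α)}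

lemma CnRules_subset (hW : W ⊆ S) (hS : Cn S ⊆ S) (hB : ∀ r ∈ B, r.1 ∈ S → r.2 ∈ S) :
    CnRules B W ⊆ S :=
  fun _ hφ => hφ S ⟨hW, hS, hB⟩

lemma subset_CnRules : W ⊆ CnRules B W :=
  fun _ hφ _ hS => hS.1 hφ

lemma Cn_CnRules_subset : Cn (CnRules B W) ⊆ CnRules B W :=
  fun _ hφ S hS => hS.2.1 (Cn_mono (fun _ hψ => Set.mem_sInter.1 hψ S hS) hφ)

lemma Cn_subset_CnRules_of_subset {X : Set (PropForm α)} (h : X ⊆ CnRules B W) :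
    Cn X ⊆ CnRules B W :=
  (Cn_mono h).trans Cn_CnRules_subset

lemma snd_mem_CnRules {r : PropForm α × PropForm α} (hr : r ∈ B) (h : r.1 ∈ CnRules B W) :
    r.2 ∈ CnRules B W :=
  fun S hS => hS.2.2 r hr (h S hS)

lemma CnRules_congr {W' : Set (PropForm α)} (h : Cn W = Cn W') :
    CnRules B W = CnRules B W' := by
  have key : ∀ {W W' : Set (PropForm α)}, Cn W = Cn W' → CnRules B W' ⊆ CnRules B W :=
    fun h => CnRules_subset ((subset_Cn _).trans (h ▸ Cn_subset_CnRules_of_subset subset_CnRules))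
      Cn_CnRules_subset fun _ hr => snd_mem_CnRules hr
  exact (key h.symm).antisymm (key h)

end Rules

lemma ext_congr {D : Set (Default α)} {W W' : Set (PropForm α)} (h : Cn W = Cn W') :
    ext D W = ext D W' := by
  ext S
  exact Eq.congr_right (CnRules_congr h)

lemma Default.Normal.applicable_iff {d : Default α} (hd : d.Normal) {S : Set (PropForm α)} :
    d.Applicable S ↔ d.con.neg ∉ Cn S := by
  rw [Default.Applicable, show d.jus = {d.con} from hd]
  simp

namespace IsExtension

variable {D : Set (Default α)} {W S : Set (PropForm α)}

lemma subset (hS : IsExtension D W S) : W ⊆ S :=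
  hS ▸ subset_CnRules

lemma Cn_subset (hS : IsExtension D W S) : Cn S ⊆ S := by
  rw [hS]
  exact Cn_CnRules_subset

lemma con_mem (hS : IsExtension D W S) {d : Default α} (hd : d ∈ D) (happ : d.Applicable S)
    (hpre : d.pre ∈ S) : d.con ∈ S := by
  rw [hS] at hpre ⊢
  exact snd_mem_CnRules (r := (d.pre, d.con)) ⟨d, hd, happ, rfl⟩ hpre

/-- A normal default theory with an inconsistent extension `S` has no default applicable
w.r.t. `S`, so `S = Cn W`. -/
lemma sat (hD : ∀ d ∈ D, d.Normal) (hW : Sat W) (hS : IsExtension D W S) : Sat S := by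
  by_contra hSsat
  have hnone : ∀ d ∈ D, ¬ d.Applicable S := fun d hd happ =>
    (hD d hd).applicable_iff.1 happ fun v hv => (hSsat ⟨v, hv⟩).elim
  have : S ⊆ Cn W := hS.le.trans <| CnRules_subset (subset_Cn W) (Cn_Cn W).le
    fun _ ⟨d, hd, happ, _⟩ => (hnone d hd happ).elim
  exact hSsat ((sat_Cn_iff.2 hW).mono this)

end IsExtension

def Default.prereqFreeNormal (θ : PropForm α) : Default α := ⟨fls.impl fls, {θ}, θ⟩

lemma Default.prereqFreeNormal_normal (θ : PropForm α) : (Default.prereqFreeNormal θ).Normal :=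
  rfl

lemma Default.prereqFreeNormal_prereqFree (θ : PropForm α) :
    (Default.prereqFreeNormal θ).PrereqFree :=
  fun _ _ h => h

lemma CnRules_reduct_prereqFreeNormal (C S : Set (PropForm α)) :
    CnRules (Reduct (Default.prereqFreeNormal '' C) S) ∅ = Cn {θ ∈ C | θ.neg ∉ Cn S} := by
  refine (CnRules_subset (Set.empty_subset _) (Cn_Cn _).le ?_).antisymm ?_
  · rintro _ ⟨_, ⟨θ, hθ, rfl⟩, happ, rfl⟩ -
    exact subset_Cn _ ⟨hθ, (Default.prereqFreeNormal_normal θ).applicable_iff.1 happ⟩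
  · refine Cn_subset_CnRules_of_subset fun θ ⟨hθ, hθS⟩ => ?_
    refine snd_mem_CnRules (r := (fls.impl fls, θ))
      ⟨_, ⟨θ, hθ, rfl⟩, (Default.prereqFreeNormal_normal θ).applicable_iff.2 hθS, rfl⟩ ?_
    exact Cn_subset_CnRules_of_subset (Set.empty_subset _) fun _ _ h => h

inductive Grounded (D : Set (Default α)) (w : PropForm α) : PropForm α → Prop
  | base : Grounded D w w
  | step {θ : PropForm α} {d : Default α} (hd : d ∈ D) (hθ : Grounded D w θ)
      (hpre : d.pre ∈ Cn {θ}) : Grounded D w (θ.conj d.con)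

namespace Grounded

variable {D : Set (Default α)} {w θ : PropForm α}

lemma entails_base (h : Grounded D w θ) : ∀ v, θ.eval v → w.eval v := by
  induction h with
  | base => exact fun _ => id
  | step _ _ _ ih => exact fun v hv => ih v (eval_conj.1 hv).1

lemma exists_conj {θ₁ θ₂ : PropForm α} (h₁ : Grounded D w θ₁) (h₂ : Grounded D w θ₂) :
    ∃ θ, Grounded D w θ ∧ ∀ v, θ.eval v ↔ θ₁.eval v ∧ θ₂.eval v := by
  induction h₂ with
  | base => exact ⟨θ₁, h₁, fun v => ⟨fun h => ⟨h, h₁.entails_base v h⟩, And.left⟩⟩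
  | @step θ₂ d hd _ hpre ih =>
    obtain ⟨θ, hθ, hθeq⟩ := ih
    refine ⟨θ.conj d.con, hθ.step hd ?_, fun v => ?_⟩
    · exact mem_Cn_singleton.2 fun v hv => mem_Cn_singleton.1 hpre v ((hθeq v).1 hv).2
    · rw [eval_conj, eval_conj, hθeq]
      tauto

lemma exists_entails_finset {T : Set (PropForm α)} (hT : Cn T ⊆ T) (hw : w ∈ T)
    (s : Finset (PropForm α)) (hs : ↑s ⊆ {θ | Grounded D w θ ∧ θ ∈ T}) :
    ∃ θ, Grounded D w θ ∧ θ ∈ T ∧ ∀ v, θ.eval v → ∀ ψ ∈ s, ψ.eval v := by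
  classical
  induction s using Finset.induction_on with
  | empty => exact ⟨w, base, hw, by simp⟩
  | insert ψ s _ ih =>
    rw [Finset.coe_insert, Set.insert_subset_iff] at hs
    obtain ⟨θ, hθ, hθT, hθs⟩ := ih hs.2
    obtain ⟨θ', hθ', hθ'eq⟩ := hs.1.1.exists_conj hθ
    refine ⟨θ', hθ', hT fun v hv => (hθ'eq v).2 ⟨hv ψ hs.1.2, hv θ hθT⟩, fun v hv => ?_⟩
    rw [hθ'eq] at hv
    simpa [hv.1] using hθs v hv.2

lemma exists_of_mem_Cn {T : Set (PropForm α)} (hT : Cn T ⊆ T) (hw : w ∈ T) {φ : PropForm α}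
    (hφ : φ ∈ Cn {θ | Grounded D w θ ∧ θ ∈ T}) :
    ∃ θ, Grounded D w θ ∧ θ ∈ T ∧ φ ∈ Cn {θ} := by
  obtain ⟨s, hs, hφs⟩ := exists_finset_subset_of_mem_Cn hφ
  obtain ⟨θ, hθ, hθT, hθs⟩ := exists_entails_finset hT hw s hs
  exact ⟨θ, hθ, hθT, mem_Cn_singleton.2 fun v hv => hφs v (hθs v hv)⟩

variable (hD : ∀ d ∈ D, d.Normal)
include hD

lemma mem_CnRules {T : Set (PropForm α)} (hT : Sat T) (hTcl : Cn T ⊆ T)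
    (h : Grounded D w θ) (hθT : θ ∈ T) : θ ∈ CnRules (Reduct D T) {w} := by
  induction h with
  | base => exact subset_CnRules rfl
  | @step θ d hd _ hpre ih =>
    have hθR := ih (hTcl (left_mem_Cn_of_conj_mem hθT))
    have happ : d.Applicable T :=
      (hD d hd).applicable_iff.2 (hT.neg_notMem_Cn (hTcl (right_mem_Cn_of_conj_mem hθT)))
    have hconR : d.con ∈ CnRules (Reduct D T) {w} :=
      snd_mem_CnRules (r := (d.pre, d.con)) ⟨d, hd, happ, rfl⟩
        (Cn_subset_CnRules_of_subset (Set.singleton_subset_iff.2 hθR) hpre)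
    exact Cn_subset_CnRules_of_subset (Set.pair_subset hθR hconR)
      (conj_mem_Cn (Set.mem_insert _ _) (Set.mem_insert_of_mem _ rfl))

lemma mem_or_neg_mem {S : Set (PropForm α)} (hS : IsExtension D {w} S) (h : Grounded D w θ) :
    θ ∈ S ∨ θ.neg ∈ Cn S := by
  induction h with
  | base => exact .inl (hS.subset rfl)
  | @step θ d hd _ hpre ih =>
    rcases ih with hθS | hθS
    · by_cases hcon : d.con.neg ∈ Cn S
      · exact .inr (neg_mem_Cn_of_entails (fun v hv => (eval_conj.1 hv).2) hcon)
      · have hconS := hS.con_mem hd ((hD d hd).applicable_iff.2 hcon)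
          (hS.Cn_subset (Cn_mono (Set.singleton_subset_iff.2 hθS) hpre))
        exact .inl (hS.Cn_subset (conj_mem_Cn hθS hconS))
    · exact .inr (neg_mem_Cn_of_entails (fun v hv => (eval_conj.1 hv).1) hθS)

end Grounded

section Normal

variable {D : Set (Default α)} {w : PropForm α} {S : Set (PropForm α)}

lemma IsExtension.subset_Cn_grounded (hS : IsExtension D {w} S) :
    S ⊆ Cn {θ | Grounded D w θ ∧ θ ∈ S} := by
  have hw : w ∈ S := hS.subset rfl
  conv_lhs => rw [hS]
  refine CnRules_subset (Set.singleton_subset_iff.2 (subset_Cn _ ⟨Grounded.base, hw⟩))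
    (Cn_Cn _).le ?_
  rintro _ ⟨d, hd, happ, rfl⟩ hpre
  obtain ⟨θ, hθ, hθS, hpreθ⟩ := Grounded.exists_of_mem_Cn hS.Cn_subset hw hpre
  have hconS := hS.con_mem hd happ (hS.Cn_subset (Cn_mono (Set.singleton_subset_iff.2 hθS) hpreθ))
  have hθ' : θ.conj d.con ∈ {θ | Grounded D w θ ∧ θ ∈ S} :=
    ⟨hθ.step hd hpreθ, hS.Cn_subset (conj_mem_Cn hθS hconS)⟩
  exact right_mem_Cn_of_conj_mem hθ'

variable (hD : ∀ d ∈ D, d.Normal) (hw : Sat {w})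
include hD hw

lemma isExtension_of_eq_Cn_grounded (hS : S = Cn {θ | Grounded D w θ ∧ θ.neg ∉ Cn S}) :
    IsExtension D {w} S := by
  set A := {θ | Grounded D w θ ∧ θ.neg ∉ Cn S}
  have hAS : A ⊆ S := hS ▸ subset_Cn A
  have hScl : Cn S ⊆ S := by rw [hS, Cn_Cn]
  -- If `w` were inconsistent with `S`, so would be every grounded formula: then `S = Cn ∅`.
  have hwA : w ∈ A := by
    refine ⟨.base, fun hneg => ?_⟩
    have hAempty : ∀ θ ∈ A, False := fun θ ⟨hθ, hθS⟩ =>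
      hθS (neg_mem_Cn_of_entails hθ.entails_base hneg)
    obtain ⟨v, hv⟩ := hw
    exact hneg v (fun ψ hψ => (hS ▸ hψ : ψ ∈ Cn A) v fun θ hθ => (hAempty θ hθ).elim) (hv w rfl)
  have hwS : w ∈ S := hAS hwA
  have hSsat : Sat S := (neg_notMem_Cn_iff.1 hwA.2).mono (Set.subset_insert _ _)
  refine (CnRules_subset (Set.singleton_subset_iff.2 hwS) hScl ?_).antisymm' ?_
  · rintro _ ⟨d, hd, happ, rfl⟩ hpre
    have hSA : S ⊆ Cn {θ | Grounded D w θ ∧ θ ∈ S} :=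
      hS.subset.trans (Cn_mono fun θ hθ => ⟨hθ.1, hAS hθ⟩)
    obtain ⟨θ, hθ, hθS, hpreθ⟩ := Grounded.exists_of_mem_Cn hScl hwS (hSA hpre)
    obtain ⟨v, hv⟩ := neg_notMem_Cn_iff.1 ((hD d hd).applicable_iff.1 happ)
    have hθ' : θ.conj d.con ∈ A := by
      refine ⟨hθ.step hd hpreθ, neg_notMem_Cn_iff.2 ⟨v, ?_⟩⟩
      rintro ψ (rfl | hψ)
      · exact eval_conj.2 ⟨hv θ (.inr hθS), hv _ (.inl rfl)⟩
      · exact hv ψ (.inr hψ)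
    exact hScl (right_mem_Cn_of_conj_mem (hAS hθ'))
  · exact hS.subset.trans (Cn_subset_CnRules_of_subset fun θ hθ =>
      hθ.1.mem_CnRules hD hSsat hScl (hAS hθ))

lemma isExtension_iff_eq_Cn_grounded :
    IsExtension D {w} S ↔ S = Cn {θ | Grounded D w θ ∧ θ.neg ∉ Cn S} := by
  refine ⟨fun hS => ?_, isExtension_of_eq_Cn_grounded hD hw⟩
  have hSsat : Sat S := hS.sat hD hw
  refine (hS.subset_Cn_grounded.trans (Cn_mono fun θ hθ => ?_)).antisymm ?_
  · exact ⟨hθ.1, hSsat.neg_notMem_Cn hθ.2⟩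
  · exact (Cn_mono fun θ hθ => (hθ.1.mem_or_neg_mem hD hS).resolve_right hθ.2).trans hS.Cn_subset

theorem ext_prereqFreeNormal_grounded :
    ext (Default.prereqFreeNormal '' {θ | Grounded D w θ}) ∅ = ext D {w} := by
  ext S
  change S = CnRules _ ∅ ↔ IsExtension D {w} S
  rw [CnRules_reduct_prereqFreeNormal, isExtension_iff_eq_Cn_grounded hD hw]
  rfl

end Normal

theorem normal_finite_W_empty_objective_general {α : Type}
    (D : Set (Default α)) (W : Set (PropForm α))
    (hD : ∀ d ∈ D, d.Normal) (hW : Consistent W) (hWfin : W.Finite) :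
    ∃ D' : Set (Default α), (∀ d ∈ D', d.Normal ∧ d.PrereqFree) ∧
      ext D' (∅ : Set (PropForm α)) = ext D W := by
  obtain ⟨w, hw⟩ := exists_Cn_eq_singleton hWfin
  refine ⟨Default.prereqFreeNormal '' {θ | Grounded D w θ}, ?_, ?_⟩
  · rintro _ ⟨θ, -, rfl⟩
    exact ⟨Default.prereqFreeNormal_normal θ, Default.prereqFreeNormal_prereqFree θ⟩
  · rw [ext_congr hw]
    exact ext_prereqFreeNormal_grounded hD (consistent_iff_sat.1 (by rwa [Consistent, ← hw]))

/-- a normal default theory with consistent finite objective part is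
equivalent to a prerequisite-free normal default theory with empty objective part. -/
theorem normal_finite_W_empty_objective {α : Type} [Denumerable α]
    (D : Set (Default α)) (W : Set (PropForm α))
    (hD : ∀ d ∈ D, d.Normal) (hW : Consistent W) (hWfin : W.Finite) :
    ∃ D' : Set (Default α), (∀ d ∈ D', d.Normal ∧ d.PrereqFree) ∧
      ext D' (∅ : Set (PropForm α)) = ext D W :=
  normal_finite_W_empty_objective_general D W hD hW hWfin
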